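/- arXiv:1807.02423 — 2 statements merged into one kernel-verified Lean document; each statement's English description precedes it below -/
import Mathlib

section
/- Let H be a Hilbert algebra and a,b ∈ H such that a→b ≠ 1 (i.e., a ≰ b in the natural order). Then there exists an irreducible implicative filter P of H such that a ∈ P and b ∉ P. -/
/-- A Hilbert algebra `(H, →, 1)`. -/
structure HilbertAlgebra (H : Type*) where
  imp : H → H → H
  one : H
  ax1 : ∀ a b : H, imp a (imp b a) = one
  ax2 : ∀ a b c : H, imp (imp a (imp b c)) (imp (imp a b) (imp a c)) = one
  ax3 : ∀ a b : H, imp a b = one → imp b a = one → a = b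

namespace HilbertAlgebra

variable {H : Type*} (hH : HilbertAlgebra H)

/-- The natural order: `a ≤ b` iff `a → b = 1`. -/
def le (a b : H) : Prop := hH.imp a b = hH.one

/-- Implicative filter. -/
def IsImplicativeFilter (F : Set H) : Prop :=
  hH.one ∈ F ∧ ∀ a b : H, a ∈ F → hH.imp a b ∈ F → b ∈ F

/-- Irreducible implicative filter. -/
def IsIrreducible (F : Set H) : Prop :=
  hH.IsImplicativeFilter F ∧ F ≠ Set.univ ∧
    ∀ F₁ F₂ : Set H, hH.IsImplicativeFilter F₁ → hH.IsImplicativeFilter F₂ →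
      F = F₁ ∩ F₂ → (F = F₁ ∨ F = F₂)

/-- Order-ideal: nonempty, downward closed, up-directed (w.r.t. the natural order). -/
def IsOrderIdeal (I : Set H) : Prop :=
  I.Nonempty ∧ (∀ a b : H, b ∈ I → hH.le a b → a ∈ I) ∧
    ∀ a b : H, a ∈ I → b ∈ I → ∃ c ∈ I, hH.le a c ∧ hH.le b c

/-- `φ(a) = {P ∈ X(H) : a ∈ P}`. -/
def phi (a : H) : Set (Set H) := {P | hH.IsIrreducible P ∧ a ∈ P}

/-- An upset of `X(H)` (the poset of irreducible implicative filters, ordered by `⊆`). -/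
def IsUpsetX (U : Set (Set H)) : Prop :=
  (∀ P ∈ U, hH.IsIrreducible P) ∧
    ∀ P Q : Set H, P ∈ U → hH.IsIrreducible Q → P ⊆ Q → Q ∈ U

/-- The Heyting implication `U ⇒ V` on upsets of `X(H)`. -/
def impUps (U V : Set (Set H)) : Set (Set H) :=
  {P | hH.IsIrreducible P ∧ ∀ Q : Set H, hH.IsIrreducible Q → P ⊆ Q → Q ∈ U → Q ∈ V}

/-- `FC(H)`: finite nonempty intersections of sets of the form `φ(a)`. -/
def FC : Set (Set (Set H)) :=
  {U | ∃ l : List H, l ≠ [] ∧ U = ⋂ a ∈ l, hH.phi a}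

/-- `X*(H)`: implicative filters that are intersections of finitely many (at least one)
irreducible implicative filters. -/
def XStar : Set (Set H) :=
  {F | ∃ S : Set (Set H), S.Finite ∧ S.Nonempty ∧ (∀ P ∈ S, hH.IsIrreducible P) ∧ F = ⋂₀ S}

/-- `Φ(a) = {F ∈ X*(H) : a ∈ F}`. -/
def Phi (a : H) : Set (Set H) := {F | F ∈ hH.XStar ∧ a ∈ F}

/-- An upset of `X*(H)` (ordered by `⊆`). -/
def IsUpsetXStar (U : Set (Set H)) : Prop :=
  (∀ F ∈ U, F ∈ hH.XStar) ∧
    ∀ F K : Set H, F ∈ U → K ∈ hH.XStar → F ⊆ K → K ∈ U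

/-- The implication `U ⇒ V` on upsets of `X*(H)`. -/
def impUpsStar (U V : Set (Set H)) : Set (Set H) :=
  {F | F ∈ hH.XStar ∧ ∀ K : Set H, K ∈ hH.XStar → F ⊆ K → K ∈ U → K ∈ V}

/-- Homomorphism of Hilbert algebras. -/
def IsHom {G : Type*} (hG : HilbertAlgebra G) (f : H → G) : Prop :=
  f hH.one = hG.one ∧ ∀ a b : H, f (hH.imp a b) = hG.imp (f a) (f b)

end HilbertAlgebra

/-- A Hilbert algebra with supremum: `(H, ∨)` is a join-semilattice whose induced
order has greatest element `1`, and `a → b = 1` iff `a ∨ b = b`. -/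
structure HilbertSup (H : Type*) extends HilbertAlgebra H where
  sup : H → H → H
  sup_comm : ∀ a b : H, sup a b = sup b a
  sup_assoc : ∀ a b c : H, sup (sup a b) c = sup a (sup b c)
  sup_idem : ∀ a : H, sup a a = a
  sup_one : ∀ a : H, sup a one = one
  imp_eq_one_iff : ∀ a b : H, imp a b = one ↔ sup a b = b

/-- Morphism of Hilbert algebras with supremum. -/
def HilbertSup.IsHomSup {H G : Type*} (hH : HilbertSup H) (hG : HilbertSup G)
    (f : H → G) : Prop :=
  hH.toHilbertAlgebra.IsHom hG.toHilbertAlgebra f ∧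
    ∀ a b : H, f (hH.sup a b) = hG.sup (f a) (f b)

/-- An implicative semilattice: a meet-semilattice with greatest element and a binary
operation `him` such that `a ⊓ b ≤ c ↔ a ≤ him b c`. -/
class ImplicativeSemilattice (G : Type*) extends SemilatticeInf G, OrderTop G where
  him : G → G → G
  inf_le_iff_le_him : ∀ a b c : G, a ⊓ b ≤ c ↔ a ≤ him b c

section Aux

namespace HilbertAlgebra

variable {H : Type*} (hH : HilbertAlgebra H)

lemma imp_one' (a : H) : hH.imp a hH.one = hH.one := by
  have h1 := hH.ax1 (hH.imp a hH.one) hH.one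
  have h2 := hH.ax1 hH.one a
  rw [h2] at h1
  exact hH.ax3 _ _ h1 h2

lemma mp' {a b : H} (ha : a = hH.one) (h : hH.imp a b = hH.one) : b = hH.one := by
  rw [ha] at h
  exact hH.ax3 b hH.one (hH.imp_one' b) h

lemma imp_self' (a : H) : hH.imp a a = hH.one := by
  have h := hH.ax2 a hH.one a
  have h2 := hH.mp' (hH.ax1 a hH.one) h
  exact hH.mp' (hH.imp_one' a) h2

lemma principal_filter (a : H) :
    hH.IsImplicativeFilter {x | hH.imp a x = hH.one} := by
  refine ⟨hH.imp_one' a, ?_⟩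
  intro p q hp hpq
  have h := hH.ax2 a p q
  have h2 := hH.mp' hpq h
  exact hH.mp' hp h2

end HilbertAlgebra

end Aux

theorem stmt_3 {H : Type*} (hH : HilbertAlgebra H) (a b : H)
    (hab : hH.imp a b ≠ hH.one) :
    ∃ P : Set H, hH.IsIrreducible P ∧ a ∈ P ∧ b ∉ P := by
  classical
  set S : Set (Set H) := {F | hH.IsImplicativeFilter F ∧ a ∈ F ∧ b ∉ F} with hS
  have hF0 : ({x | hH.imp a x = hH.one} : Set H) ∈ S := by
    refine ⟨hH.principal_filter a, hH.imp_self' a, ?_⟩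
    exact hab
  obtain ⟨P, -, hPmax⟩ := zorn_subset_nonempty S (fun c hcS hchain hcne => by
      obtain ⟨F0, hF0c⟩ := hcne
      refine ⟨⋃₀ c, ⟨⟨?_, ?_⟩, ?_, ?_⟩, fun s hs => Set.subset_sUnion_of_mem hs⟩
      · exact ⟨F0, hF0c, (hcS hF0c).1.1⟩
      · rintro p q ⟨F1, hF1, hpF1⟩ ⟨F2, hF2, hpqF2⟩
        rcases hchain.total hF1 hF2 with h | h
        · exact ⟨F2, hF2, (hcS hF2).1.2 p q (h hpF1) hpqF2⟩
        · exact ⟨F1, hF1, (hcS hF1).1.2 p q hpF1 (h hpqF2)⟩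
      · exact ⟨F0, hF0c, (hcS hF0c).2.1⟩
      · rintro ⟨F1, hF1, hbF1⟩
        exact (hcS hF1).2.2 hbF1)
    _ hF0
  obtain ⟨⟨hPfil, haP, hbP⟩, hPmax'⟩ := hPmax
  refine ⟨P, ⟨hPfil, ?_, ?_⟩, haP, hbP⟩
  · intro h
    exact hbP (h ▸ Set.mem_univ b)
  · intro F1 F2 hF1 hF2 hPeq
    by_contra hcon
    push_neg at hcon
    obtain ⟨hne1, hne2⟩ := hcon
    have hsub1 : P ⊆ F1 := hPeq ▸ Set.inter_subset_left
    have hsub2 : P ⊆ F2 := hPeq ▸ Set.inter_subset_right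
    have hb1 : b ∈ F1 := by
      by_contra hb1
      exact hne1 (le_antisymm hsub1 (hPmax' ⟨hF1, hsub1 haP, hb1⟩ hsub1))
    have hb2 : b ∈ F2 := by
      by_contra hb2
      exact hne2 (le_antisymm hsub2 (hPmax' ⟨hF2, hsub2 haP, hb2⟩ hsub2))
    exact hbP (hPeq ▸ ⟨hb1, hb2⟩)
end

section
/- Let H be a Hilbert algebra with supremum, G a generalized Heyting algebra, and f : H → G a map with f(1) = ⊤, f(a→b) = f(a) ⇨ f(b), and f(a∨b) = f(a) ⊔ f(b) for all a,b ∈ H. Then there exists a unique map h : FC(H) → G such that h(X(H)) = ⊤, h(U ∩ V) = h(U) ⊓ h(V) and h(U ∪ V) = h(U) ⊔ h(V) for all U,V ∈ FC(H) (note FC(H) is closed under binary unions), and h(φ(a)) = f(a) for all a ∈ H. -/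
/-! The extension sends `φ(a₁) ∩ ⋯ ∩ φ(aₙ)` to `f a₁ ⊓ ⋯ ⊓ f aₙ`. It is well defined, and
preserves the lattice operations, because of a single inequality: if every irreducible implicative
filter containing `a₁, …, aₙ` contains `b`, then `f a₁ ⊓ ⋯ ⊓ f aₙ ≤ f b`. Indeed
`{x | f a₁ ⊓ ⋯ ⊓ f aₙ ≤ f x}` is an implicative filter, as `f` preserves `1` and `→`, and a filter
avoiding `b` extends, by Zorn's lemma, to an irreducible one avoiding `b`. Binary unions reduce to
this inequality through distributivity of `G` and `φ(a) ∪ φ(b) ⊆ φ(a ∨ b)`; uniqueness holds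
because `FC(H)` is generated by the sets `φ(a)` under intersection. -/

namespace HilbertAlgebra

variable {H : Type*} {hA : HilbertAlgebra H}

theorem IsImplicativeFilter.mem_of_imp_eq_one {F : Set H} (hF : hA.IsImplicativeFilter F)
    {a b : H} (ha : a ∈ F) (hab : hA.imp a b = hA.one) : b ∈ F :=
  hF.2 a b ha (hab ▸ hF.1)

theorem IsImplicativeFilter.sUnion_of_isChain {C : Set (Set H)}
    (hC : ∀ F ∈ C, hA.IsImplicativeFilter F) (hchain : IsChain (· ⊆ ·) C) (hne : C.Nonempty) :
    hA.IsImplicativeFilter (⋃₀ C) := by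
  obtain ⟨F₀, hF₀⟩ := hne
  refine ⟨⟨F₀, hF₀, (hC F₀ hF₀).1⟩, ?_⟩
  rintro a b ⟨F₁, hF₁, ha⟩ ⟨F₂, hF₂, hab⟩
  rcases hchain.total hF₁ hF₂ with h | h
  · exact ⟨F₂, hF₂, (hC F₂ hF₂).2 a b (h ha) hab⟩
  · exact ⟨F₁, hF₁, (hC F₁ hF₁).2 a b ha (h hab)⟩

theorem isIrreducible_of_maximal {b : H} {M : Set H}
    (hM : Maximal (fun F => hA.IsImplicativeFilter F ∧ b ∉ F) M) : hA.IsIrreducible M := by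
  refine ⟨hM.1.1, fun h => hM.1.2 (h ▸ Set.mem_univ b), fun F₁ F₂ hF₁ hF₂ hM₁₂ => ?_⟩
  by_contra! hne
  have mem_of_ne {F : Set H} (hF : hA.IsImplicativeFilter F) (hMF : M ⊆ F) (hne : M ≠ F) :
      b ∈ F := by
    by_contra hb
    exact hne (hM.eq_of_subset ⟨hF, hb⟩ hMF)
  refine hM.1.2 (hM₁₂ ▸ ⟨?_, ?_⟩)
  · exact mem_of_ne hF₁ (hM₁₂ ▸ Set.inter_subset_left) hne.1
  · exact mem_of_ne hF₂ (hM₁₂ ▸ Set.inter_subset_right) hne.2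

theorem exists_isIrreducible_of_notMem {F : Set H} (hF : hA.IsImplicativeFilter F) {b : H}
    (hb : b ∉ F) : ∃ P, hA.IsIrreducible P ∧ F ⊆ P ∧ b ∉ P := by
  obtain ⟨M, hFM, hM⟩ := zorn_subset_nonempty {F | hA.IsImplicativeFilter F ∧ b ∉ F}
    (fun C hC hchain hne => ⟨⋃₀ C,
      ⟨IsImplicativeFilter.sUnion_of_isChain (fun F hF => (hC hF).1) hchain hne,
        fun ⟨F, hF, hbF⟩ => (hC hF).2 hbF⟩,
      fun _ => Set.subset_sUnion_of_mem⟩) F ⟨hF, hb⟩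
  exact ⟨M, isIrreducible_of_maximal hM, hFM, hM.1.2⟩

theorem mem_biInter_phi_iff {P : Set H} (hP : hA.IsIrreducible P) {l : List H} :
    P ∈ ⋂ a ∈ l, hA.phi a ↔ ∀ a ∈ l, a ∈ P := by
  simp [phi, hP]

theorem biInter_phi_subset_phi {l : List H} {a : H} (ha : a ∈ l) :
    ⋂ x ∈ l, hA.phi x ⊆ hA.phi a :=
  Set.biInter_subset_of_mem ha

theorem biInter_phi_cons (a : H) (l : List H) :
    ⋂ x ∈ a :: l, hA.phi x = hA.phi a ∩ ⋂ x ∈ l, hA.phi x := by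
  simp only [List.mem_cons, Set.iInter_iInter_eq_or_left]

theorem biInter_phi_append (l₁ l₂ : List H) :
    ⋂ x ∈ l₁ ++ l₂, hA.phi x = (⋂ x ∈ l₁, hA.phi x) ∩ ⋂ x ∈ l₂, hA.phi x := by
  simp only [List.mem_append, Set.iInter_or, Set.iInter_inter_distrib]

noncomputable def FC.rep (U : hA.FC) : List H := U.2.choose

theorem FC.rep_ne_nil (U : hA.FC) : FC.rep U ≠ [] :=
  U.2.choose_spec.1

theorem FC.eq_biInter_rep (U : hA.FC) : (U : Set (Set H)) = ⋂ a ∈ FC.rep U, hA.phi a :=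
  U.2.choose_spec.2

theorem biInter_phi_mem_FC {l : List H} (hl : l ≠ []) : ⋂ a ∈ l, hA.phi a ∈ hA.FC :=
  ⟨l, hl, rfl⟩

section Extension

variable {G : Type*} [GeneralizedHeytingAlgebra G] {f : H → G}

variable (hA f) in
noncomputable def extendFC [DecidableEq H] (U : hA.FC) : G := (FC.rep U).toFinset.inf f

theorem eq_extendFC_of_map_inter_of_map_phi [DecidableEq H] {h : hA.FC → G}
    (hinter : ∀ U V W : hA.FC,
      (W : Set (Set H)) = (U : Set (Set H)) ∩ (V : Set (Set H)) → h W = h U ⊓ h V)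
    (hphi : ∀ (a : H) (U : hA.FC), (U : Set (Set H)) = hA.phi a → h U = f a) :
    h = extendFC hA f := by
  suffices key : ∀ l : List H, l ≠ [] → ∀ U : hA.FC,
      (U : Set (Set H)) = ⋂ a ∈ l, hA.phi a → h U = l.toFinset.inf f from
    funext fun U => key _ (FC.rep_ne_nil U) U (FC.eq_biInter_rep U)
  intro l
  induction l with
  | nil => exact fun hne => absurd rfl hne
  | cons a t ih =>
    intro _ U hU
    by_cases ht : t = []
    · subst ht
      simpa using hphi a U (by simpa using hU)
    · have hφa : hA.phi a ∈ hA.FC := by simpa using biInter_phi_mem_FC (List.cons_ne_nil a [])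
      rw [hinter ⟨_, hφa⟩ ⟨_, biInter_phi_mem_FC ht⟩ U (hU.trans (biInter_phi_cons a t)),
        hphi a ⟨_, hφa⟩ rfl, ih ht _ rfl, List.toFinset_cons, Finset.inf_insert]

variable (hf1 : f hA.one = ⊤) (hfimp : ∀ a b, f (hA.imp a b) = f a ⇨ f b)
include hf1 hfimp

theorem isImplicativeFilter_setOf_le (c : G) : hA.IsImplicativeFilter {x | c ≤ f x} :=
  ⟨by simp [hf1], fun a b ha hab => (le_inf le_rfl ha).trans (le_himp_iff.1 (hfimp a b ▸ hab))⟩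

theorem inf_le_of_forall_isIrreducible (s : Finset H) {b : H}
    (h : ∀ P, hA.IsIrreducible P → ↑s ⊆ P → b ∈ P) : s.inf f ≤ f b := by
  by_contra hb
  obtain ⟨P, hP, hsP, hbP⟩ :=
    exists_isIrreducible_of_notMem (isImplicativeFilter_setOf_le hf1 hfimp (s.inf f)) hb
  exact hbP (h P hP fun a ha => hsP (Finset.inf_le ha))

variable [DecidableEq H]

theorem inf_le_of_biInter_phi_subset {l : List H} {b : H}
    (h : ⋂ a ∈ l, hA.phi a ⊆ hA.phi b) : l.toFinset.inf f ≤ f b :=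
  inf_le_of_forall_isIrreducible hf1 hfimp _ fun _ hP hlP =>
    (h ((mem_biInter_phi_iff hP).2 fun _ ha => hlP (List.mem_toFinset.2 ha))).2

theorem inf_le_inf_of_biInter_phi_subset {l l' : List H}
    (h : ⋂ a ∈ l, hA.phi a ⊆ ⋂ a ∈ l', hA.phi a) : l.toFinset.inf f ≤ l'.toFinset.inf f :=
  Finset.le_inf fun _ hc => inf_le_of_biInter_phi_subset hf1 hfimp <|
    h.trans (biInter_phi_subset_phi (List.mem_toFinset.1 hc))

theorem extendFC_mono {U V : hA.FC} (h : (U : Set (Set H)) ⊆ V) :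
    extendFC hA f U ≤ extendFC hA f V :=
  inf_le_inf_of_biInter_phi_subset hf1 hfimp (FC.eq_biInter_rep U ▸ FC.eq_biInter_rep V ▸ h)

theorem extendFC_eq {U : hA.FC} {l : List H} (hU : (U : Set (Set H)) = ⋂ a ∈ l, hA.phi a) :
    extendFC hA f U = l.toFinset.inf f := by
  have hrep := (FC.eq_biInter_rep U).symm.trans hU
  exact le_antisymm (inf_le_inf_of_biInter_phi_subset hf1 hfimp hrep.subset)
    (inf_le_inf_of_biInter_phi_subset hf1 hfimp hrep.symm.subset)

theorem extendFC_of_eq_setOf_isIrreducible (U : hA.FC)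
    (hU : (U : Set (Set H)) = {P | hA.IsIrreducible P}) : extendFC hA f U = ⊤ :=
  top_le_iff.1 <| Finset.le_inf fun c hc =>
    inf_le_of_forall_isIrreducible hf1 hfimp ∅ fun _ hP _ =>
      ((mem_biInter_phi_iff hP).1 (FC.eq_biInter_rep U ▸ hU ▸ hP) c (List.mem_toFinset.1 hc))

theorem extendFC_of_eq_inter (U V W : hA.FC)
    (hW : (W : Set (Set H)) = (U : Set (Set H)) ∩ (V : Set (Set H))) :
    extendFC hA f W = extendFC hA f U ⊓ extendFC hA f V := by
  rw [extendFC_eq hf1 hfimp (l := FC.rep U ++ FC.rep V), List.toFinset_append, Finset.inf_union]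
  · rfl
  · rw [hW, biInter_phi_append, ← FC.eq_biInter_rep, ← FC.eq_biInter_rep]

theorem extendFC_of_eq_phi (a : H) (U : hA.FC) (hU : (U : Set (Set H)) = hA.phi a) :
    extendFC hA f U = f a := by
  rw [extendFC_eq hf1 hfimp (l := [a]) (by simpa using hU)]
  simp

end Extension

end HilbertAlgebra

namespace HilbertSup

open HilbertAlgebra

variable {H : Type*} (hS : HilbertSup H)

theorem imp_sup_left (a b : H) : hS.imp a (hS.sup a b) = hS.one :=
  (hS.imp_eq_one_iff _ _).2 (by rw [← hS.sup_assoc, hS.sup_idem])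

theorem phi_union_phi_subset (a b : H) : hS.phi a ∪ hS.phi b ⊆ hS.phi (hS.sup a b) := by
  rintro P (⟨hP, ha⟩ | ⟨hP, hb⟩)
  · exact ⟨hP, hP.1.mem_of_imp_eq_one ha (hS.imp_sup_left a b)⟩
  · exact ⟨hP, hP.1.mem_of_imp_eq_one hb (hS.sup_comm b a ▸ hS.imp_sup_left b a)⟩

variable {hS} {G : Type*} [GeneralizedHeytingAlgebra G] {f : H → G} [DecidableEq H]

theorem extendFC_of_eq_union (hf1 : f hS.one = ⊤)
    (hfimp : ∀ a b, f (hS.imp a b) = f a ⇨ f b) (hfsup : ∀ a b, f (hS.sup a b) = f a ⊔ f b)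
    (U V W : hS.FC) (hW : (W : Set (Set H)) = (U : Set (Set H)) ∪ (V : Set (Set H))) :
    extendFC hS.toHilbertAlgebra f W =
      extendFC hS.toHilbertAlgebra f U ⊔ extendFC hS.toHilbertAlgebra f V := by
  refine le_antisymm ?_ (sup_le (extendFC_mono hf1 hfimp (hW ▸ Set.subset_union_left))
    (extendFC_mono hf1 hfimp (hW ▸ Set.subset_union_right)))
  simp only [extendFC]
  rw [Finset.inf_sup_inf]
  refine Finset.le_inf fun ⟨a, b⟩ hab => hfsup a b ▸ inf_le_of_biInter_phi_subset hf1 hfimp ?_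
  rw [Finset.mem_product, List.mem_toFinset, List.mem_toFinset] at hab
  rw [← FC.eq_biInter_rep, hW, FC.eq_biInter_rep U, FC.eq_biInter_rep V]
  exact (Set.union_subset_union (biInter_phi_subset_phi hab.1)
    (biInter_phi_subset_phi hab.2)).trans (phi_union_phi_subset hS a b)

end HilbertSup

theorem stmt_14 {H G : Type*} (hH : HilbertSup H) [GeneralizedHeytingAlgebra G]
    (f : H → G) (hf1 : f hH.one = (⊤ : G))
    (hfimp : ∀ a b : H, f (hH.imp a b) = f a ⇨ f b)
    (hfsup : ∀ a b : H, f (hH.sup a b) = f a ⊔ f b) :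
    ∃! h : hH.toHilbertAlgebra.FC → G,
      (∀ U : hH.toHilbertAlgebra.FC,
        (U : Set (Set H)) = {P : Set H | hH.toHilbertAlgebra.IsIrreducible P} → h U = ⊤) ∧
      (∀ U V W : hH.toHilbertAlgebra.FC,
        (W : Set (Set H)) = (U : Set (Set H)) ∩ (V : Set (Set H)) → h W = h U ⊓ h V) ∧
      (∀ U V W : hH.toHilbertAlgebra.FC,
        (W : Set (Set H)) = (U : Set (Set H)) ∪ (V : Set (Set H)) → h W = h U ⊔ h V) ∧
      (∀ (a : H) (U : hH.toHilbertAlgebra.FC),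
        (U : Set (Set H)) = hH.toHilbertAlgebra.phi a → h U = f a) := by
  classical
  open HilbertAlgebra in
  exact ⟨extendFC hH.toHilbertAlgebra f,
    ⟨extendFC_of_eq_setOf_isIrreducible hf1 hfimp, extendFC_of_eq_inter hf1 hfimp,
      HilbertSup.extendFC_of_eq_union hf1 hfimp hfsup, extendFC_of_eq_phi hf1 hfimp⟩,
    fun _ ⟨_, hinter, _, hphi⟩ => eq_extendFC_of_map_inter_of_map_phi hinter hphi⟩
end
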